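/- Let M=(S,P,I,AP,L) be a finite generalized possibilistic Kripke structure and B : S → [0,1] a fuzzy state. Then for every state s ∈ S, the persistence possibility satisfies Po(s ⊨ ◇□B) = ( P* ∘ r_{D_B∘P} )(s) = sup_{t∈S} ( P*(s,t) ∧ r_{D_B∘P}(t) ), where r_{D_B∘P}(t) = sup{ inf_{i≥0} ( B(s_i) ∧ P(s_i,s_{i+1}) ) : s₀ = t, s_i ∈ S for all i ≥ 1 }. -/

import Mathlib

open unitInterval

instance : Fact ((0:ℝ) ≤ 1) := ⟨zero_le_one⟩

open Classical in
/-- The identity fuzzy matrix `P⁰`. -/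
noncomputable def matId {S : Type*} : S → S → unitInterval :=
  fun s t => if s = t then 1 else 0

/-- Max–min composition of fuzzy matrices: `(A∘B)(s,t) = sup_u A(s,u) ∧ B(u,t)`. -/
noncomputable def matComp {S : Type*} (A B : S → S → unitInterval) : S → S → unitInterval :=
  fun s t => ⨆ u, A s u ⊓ B u t

/-- `k`-th max–min power of a fuzzy matrix (`A⁰` is the identity matrix). -/
noncomputable def matPow {S : Type*} (A : S → S → unitInterval) : ℕ → S → S → unitInterval
  | 0 => matId
  | n + 1 => matComp (matPow A n) A

/-- Transitive closure `A⁺ = sup_{k ≥ 1} Aᵏ`. -/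
noncomputable def transClos {S : Type*} (A : S → S → unitInterval) : S → S → unitInterval :=
  fun s t => ⨆ k, matPow A (k + 1) s t

/-- Reflexive–transitive closure `A* = A⁰ ∨ A⁺ = sup_{k ≥ 0} Aᵏ`. -/
noncomputable def reflTransClos {S : Type*} (A : S → S → unitInterval) : S → S → unitInterval :=
  fun s t => ⨆ k, matPow A k s t

open Classical in
/-- The diagonal fuzzy matrix `D_B` of a fuzzy state `B`. -/
noncomputable def diagMat {S : Type*} (B : S → unitInterval) : S → S → unitInterval :=
  fun s t => if s = t then B s else 0

/-- Max–min application of a fuzzy matrix to a fuzzy vector. -/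
noncomputable def matVec {S : Type*} (A : S → S → unitInterval) (v : S → unitInterval) :
    S → unitInterval :=
  fun s => ⨆ t, A s t ⊓ v t

/-- `r_P(s) = sup { inf_{i≥0} P(s_i, s_{i+1}) : s₀ = s }`. -/
noncomputable def rP {S : Type*} (P : S → S → unitInterval) : S → unitInterval :=
  fun s => ⨆ (π : ℕ → S) (_ : π 0 = s), ⨅ i, P (π i) (π (i + 1))

/-- The possibility `Po(s ⊨ Φ)` of a fuzzy path property `Φ` at a state `s`:
`sup_{π ∈ S^ω, π₀ = s} ( inf_{i≥0} P(π_i,π_{i+1}) ∧ Φ(π) )`. -/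
noncomputable def Po {S : Type*} (P : S → S → unitInterval) (Φ : (ℕ → S) → unitInterval)
    (s : S) : unitInterval :=
  ⨆ (π : ℕ → S) (_ : π 0 = s), (⨅ i, P (π i) (π (i + 1))) ⊓ Φ π

/-- The generalized possibility measure of a set of infinite state sequences:
`Po(E) = sup_{π ∈ E} ( I(π₀) ∧ inf_{i≥0} P(π_i,π_{i+1}) )`. -/
noncomputable def PoSet {S : Type*} (P : S → S → unitInterval) (Init : S → unitInterval)
    (E : Set (ℕ → S)) : unitInterval :=
  ⨆ π ∈ E, Init (π 0) ⊓ ⨅ i, P (π i) (π (i + 1))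

/-!
A path that stays in `B` from time `i` on splits into a prefix of length `i`, whose weight is
bounded by `Pⁱ(s, π i)`, and a tail that is a path of `D_B ∘ P` from `π i`; this gives `≤`.
Conversely, persistence is prefix-independent, so a path of `D_B ∘ P` from `t` can be preceded
by any `P`-path from `s` to `t`, and the sup over such prefixes is `P*(s, t)`.
-/

section

variable {S : Type*}

noncomputable def pathWeight (P : S → S → unitInterval) (π : ℕ → S) : unitInterval :=
  ⨅ i, P (π i) (π (i + 1))

noncomputable def persistence (B : S → unitInterval) (π : ℕ → S) : unitInterval :=
  ⨆ i, ⨅ j, ⨅ _ : i ≤ j, B (π j)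

theorem pathWeight_cons (P : S → S → unitInterval) (s : S) (ρ : ℕ → S) :
    pathWeight P (Stream'.cons s ρ) = P s (ρ 0) ⊓ pathWeight P ρ :=
  (inf_iInf_nat_succ _).symm

theorem pathWeight_le_matPow (P : S → S → unitInterval) (π : ℕ → S) (n : ℕ) :
    pathWeight P π ≤ matPow P n (π 0) (π n) := by
  induction n with
  | zero => simpa [matPow, matId] using le_one'
  | succ n ih => exact le_iSup_of_le (π n) (le_inf ih (iInf_le _ n))

theorem matComp_diagMat_apply (B : S → unitInterval) (P : S → S → unitInterval) (u v : S) :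
    matComp (diagMat B) P u v = B u ⊓ P u v := by
  refine le_antisymm (iSup_le fun w => ?_) (le_iSup_of_le u (by simp [diagMat]))
  by_cases h : u = w
  · subst h; simp [diagMat]
  · simp [diagMat, h]

theorem pathWeight_matComp_diagMat (B : S → unitInterval) (P : S → S → unitInterval)
    (π : ℕ → S) :
    pathWeight (matComp (diagMat B) P) π = (⨅ i, B (π i)) ⊓ pathWeight P π := by
  simp only [pathWeight, matComp_diagMat_apply, iInf_inf_eq]

theorem persistence_le_cons (B : S → unitInterval) (s : S) (ρ : ℕ → S) :
    persistence B ρ ≤ persistence B (Stream'.cons s ρ) :=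
  iSup_le fun i => le_iSup_of_le (i + 1) <| le_iInf₂ fun j hj => by
    cases j with
    | zero => omega
    | succ k => exact iInf₂_le k (by omega)

theorem inf_Po_le_of_le_cons {Φ : (ℕ → S) → unitInterval}
    (hΦ : ∀ s ρ, Φ ρ ≤ Φ (Stream'.cons s ρ)) (P : S → S → unitInterval) (s u : S) :
    P s u ⊓ Po P Φ u ≤ Po P Φ s := by
  simp only [Po, inf_iSup_eq]
  refine iSup₂_le fun ρ hρ => le_iSup₂_of_le (Stream'.cons s ρ) rfl ?_
  change _ ⊓ (pathWeight P ρ ⊓ Φ ρ) ≤ pathWeight P (Stream'.cons s ρ) ⊓ Φ (Stream'.cons s ρ)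
  rw [pathWeight_cons, hρ, inf_assoc]
  exact inf_le_inf_left _ (inf_le_inf_left _ (hΦ s ρ))

theorem matPow_inf_Po_le {Φ : (ℕ → S) → unitInterval}
    (hΦ : ∀ s ρ, Φ ρ ≤ Φ (Stream'.cons s ρ)) (P : S → S → unitInterval) (n : ℕ) (s t : S) :
    matPow P n s t ⊓ Po P Φ t ≤ Po P Φ s := by
  induction n generalizing t with
  | zero =>
    by_cases h : s = t
    · subst h; exact inf_le_right
    · simp [matPow, matId, h]
  | succ n ih =>
    change (⨆ u, matPow P n s u ⊓ P u t) ⊓ _ ≤ _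
    rw [iSup_inf_eq]
    refine iSup_le fun u => ?_
    rw [inf_assoc]
    exact (inf_le_inf_left _ (inf_Po_le_of_le_cons hΦ P u t)).trans (ih u)

theorem reflTransClos_inf_Po_le {Φ : (ℕ → S) → unitInterval}
    (hΦ : ∀ s ρ, Φ ρ ≤ Φ (Stream'.cons s ρ)) (P : S → S → unitInterval) (s t : S) :
    reflTransClos P s t ⊓ Po P Φ t ≤ Po P Φ s := by
  simp only [reflTransClos, iSup_inf_eq]
  exact iSup_le fun n => matPow_inf_Po_le hΦ P n s t

theorem rP_matComp_diagMat_le_Po_persistence (P : S → S → unitInterval) (B : S → unitInterval)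
    (t : S) : rP (matComp (diagMat B) P) t ≤ Po P (persistence B) t :=
  iSup₂_mono fun π _ => by
    change pathWeight _ π ≤ pathWeight P π ⊓ persistence B π
    rw [pathWeight_matComp_diagMat, inf_comm]
    exact inf_le_inf_left _ (le_iSup_of_le 0 (le_iInf₂ fun j _ => iInf_le _ j))

theorem Po_persistence_le (P : S → S → unitInterval) (B : S → unitInterval) (s : S) :
    Po P (persistence B) s ≤ ⨆ t, reflTransClos P s t ⊓ rP (matComp (diagMat B) P) t := by
  refine iSup₂_le fun π hπ => ?_
  subst hπ
  change pathWeight P π ⊓ persistence B π ≤ _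
  rw [persistence, inf_iSup_eq]
  refine iSup_le fun i => le_iSup_of_le (π i) (le_inf ?_ ?_)
  · exact inf_le_left.trans <|
      (pathWeight_le_matPow P π i).trans (le_iSup (matPow P · (π 0) (π i)) i)
  · refine le_iSup₂_of_le (fun m => π (i + m)) rfl ?_
    change _ ≤ pathWeight _ (fun m => π (i + m))
    rw [pathWeight_matComp_diagMat]
    exact le_inf (le_iInf fun m => inf_le_right.trans (iInf₂_le (i + m) (Nat.le_add_right i m)))
      (le_iInf fun m => inf_le_left.trans (iInf_le _ (i + m)))

end

theorem Po_persistence_eq_general {S : Type*}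
    (P : S → S → unitInterval)
    (B : S → unitInterval) (s : S) :
    Po P (fun π => ⨆ i : ℕ, ⨅ j : ℕ, ⨅ _ : i ≤ j, B (π j)) s =
      ⨆ t : S, reflTransClos P s t ⊓ rP (matComp (diagMat B) P) t :=
  le_antisymm (Po_persistence_le P B s) <| iSup_le fun t =>
    (inf_le_inf_left _ (rP_matComp_diagMat_le_Po_persistence P B t)).trans
      (reflTransClos_inf_Po_le (persistence_le_cons B) P s t)

/-- For a finite GPKS and a fuzzy state `B`, the persistence
possibility satisfies
`Po(s ⊨ ◇□B) = ( P* ∘ r_{D_B∘P} )(s) = sup_{t∈S} ( P*(s,t) ∧ r_{D_B∘P}(t) )`,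
where `(D_B∘P)(u,v) = B(u) ∧ P(u,v)`. -/
theorem Po_persistence_eq {S : Type*} [Fintype S] [Nonempty S]
    {AP : Type*} [Fintype AP]
    (P : S → S → unitInterval) (Init : S → unitInterval) (L : S → AP → unitInterval)
    (B : S → unitInterval) (s : S) :
    Po P (fun π => ⨆ i : ℕ, ⨅ j : ℕ, ⨅ _ : i ≤ j, B (π j)) s =
      ⨆ t : S, reflTransClos P s t ⊓ rP (matComp (diagMat B) P) t :=
  Po_persistence_eq_general P B s
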